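/- arXiv:1603.00268 — 4 statements merged into one kernel-verified Lean document; each statement's English description precedes it below -/
import Mathlib

section
/- Let X be a compact metric space on which the inductive limit K(∞) of an increasing chain of compact groups K(1) ⊆ K(2) ⊆ ⋯ acts by isometric homeomorphisms. Suppose x_0 ∈ X and the sequence of orbital measures μ_n^{x_0} has a weak limit point μ in the space of Borel probability measures. Then μ is K(∞)-invariant and ergodic. -/
/-!
Along the subsequence every fixed `g ∈ K(∞)` eventually lies in `K(φ i)`, and from then on left
invariance of the Haar measure makes the orbital integrals of `f` and of `f (g • ·)` agree; hence
`μ` is invariant. The orbital measures live on the orbit of `x₀`, so `μ` is carried by its closure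
`Y`. As the action is isometric, every orbit in `Y` is dense in `Y`; averaging a continuous
function over finitely many translates that carry its minimum point near each point of a finite
net of `Y` shrinks its oscillation on `Y` by a fixed factor, up to its modulus of continuity.
Thus all invariant probability measures carried by `Y` agree, and `μ` equals its normalized
restriction to any invariant set of positive measure, which is ergodicity.
-/

open MeasureTheory Filter Topology Metric MulAction ProbabilityTheory
open scoped Finset

theorem Finset.sum_le_add_card_sub_one_mul {ι : Type*} {s : Finset ι} {a : ι → ℝ} {i : ι}
    (hi : i ∈ s) {δ D : ℝ} (hai : a i ≤ δ) (ha : ∀ j ∈ s, a j ≤ D) :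
    ∑ j ∈ s, a j ≤ δ + (#s - 1) * D := by
  classical
  rw [← Finset.add_sum_erase s a hi]
  have h := Finset.sum_le_card_nsmul (s.erase i) a D fun j hj => ha j (Finset.mem_of_mem_erase hj)
  rw [nsmul_eq_mul, Finset.card_erase_of_mem hi,
    Nat.cast_sub (Finset.card_pos.2 ⟨i, hi⟩), Nat.cast_one] at h
  exact add_le_add hai h

theorem exists_le_of_forall_imp_contraction {P : ℝ → Prop} {c q D₀ ε : ℝ} (hq₀ : 0 ≤ q)
    (hq₁ : q < 1) (h₀ : P D₀) (hstep : ∀ D, P D → P (c + q * (D - c))) (hε : c < ε) :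
    ∃ D ≤ ε, P D := by
  have hiter : ∀ n : ℕ, P (c + q ^ n * (D₀ - c)) := by
    intro n
    induction n with
    | zero => simpa using h₀
    | succ n ih => convert hstep _ ih using 1; ring
  have hlim : Tendsto (fun n : ℕ => c + q ^ n * (D₀ - c)) atTop (𝓝 (c + 0 * (D₀ - c))) :=
    tendsto_const_nhds.add ((tendsto_pow_atTop_nhds_zero_of_lt_one hq₀ hq₁).mul_const _)
  rw [zero_mul, add_zero] at hlim
  obtain ⟨n, hn⟩ := (hlim.eventually (gt_mem_nhds hε)).exists
  exact ⟨_, hn.le, hiter n⟩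

/-- Unlike `integral_mul_left_eq_self`, no measurability of multiplication is assumed: a map
pushing a nonzero measure forward to itself is automatically a.e.-measurable. -/
theorem integral_comp_mul_left_of_map_eq {K E : Type*} [Group K] [MeasurableSpace K]
    [NormedAddCommGroup E] [NormedSpace ℝ E] {m : Measure K} [NeZero m]
    (hm : ∀ h : K, m.map (h * ·) = m) (g : K) (ψ : K → E) :
    ∫ k, ψ (g * k) ∂m = ∫ k, ψ k ∂m := by
  have hmeas : ∀ h : K, AEMeasurable (h * ·) m := fun h => by
    by_contra hh
    exact NeZero.ne m (by rw [← hm h, Measure.map_of_not_aemeasurable hh])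
  by_cases hψ : AEStronglyMeasurable ψ m
  · rw [← integral_map (hmeas g) (by rwa [hm g]), hm g]
  · have hψg : ¬ AEStronglyMeasurable (fun k => ψ (g * k)) m := fun h' => hψ <| by
      have h'' : AEStronglyMeasurable (fun k => ψ (g * k)) (m.map (g⁻¹ * ·)) := by rwa [hm g⁻¹]
      simpa [Function.comp_def] using h''.comp_aemeasurable (hmeas g⁻¹)
    rw [integral_non_aestronglyMeasurable hψ, integral_non_aestronglyMeasurable hψg]

theorem ErgodicSMul.of_forall_eq_of_absolutelyContinuous {G X : Type*} [SMul G X]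
    [MeasurableSpace X] {μ : Measure X} [IsProbabilityMeasure μ] [SMulInvariantMeasure G X μ]
    (h : ∀ ν : Measure X, IsProbabilityMeasure ν → SMulInvariantMeasure G X ν → ν ≪ μ → ν = μ) :
    ErgodicSMul G X μ where
  aeconst_of_forall_preimage_smul_ae_eq {s} hs hinv := by
    by_contra hconst
    have hs₀ : μ s ≠ 0 := fun h₀ =>
      hconst (eventuallyConst_set.2 (Or.inr (measure_eq_zero_iff_ae_notMem.1 h₀)))
    have hsc₀ : μ sᶜ ≠ 0 := fun h₀ => hconst (eventuallyConst_set.2 (Or.inl (mem_ae_iff.2 h₀)))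
    have := cond_isProbabilityMeasure hs₀
    have hinv_cond : SMulInvariantMeasure G X μ[|s] := ⟨fun g A hA => by
      have hae : (s ∩ (g • ·) ⁻¹' A : Set X) =ᵐ[μ] ((g • ·) ⁻¹' s ∩ (g • ·) ⁻¹' A : Set X) :=
        (hinv g).symm.inter (ae_eq_refl _)
      rw [cond_apply hs, cond_apply hs, measure_congr hae, ← Set.preimage_inter,
        SMulInvariantMeasure.measure_preimage_smul g (hs.inter hA)]⟩
    refine hsc₀ ?_
    rw [← h _ this hinv_cond cond_absolutelyContinuous, cond_apply hs, Set.inter_compl_self,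
      measure_empty, mul_zero]

theorem ErgodicSMul.measure_eq_zero_or_one {G X : Type*} [SMul G X] [MeasurableSpace X]
    {μ : Measure X} [IsProbabilityMeasure μ] [ErgodicSMul G X μ] {s : Set X}
    (hs : MeasurableSet s) (hinv : ∀ g : G, (g • ·) ⁻¹' s = s) : μ s = 0 ∨ μ s = 1 := by
  have hconst : EventuallyConst s (ae μ) := MeasureTheory.aeconst_of_forall_preimage_smul_ae_eq G
    hs.nullMeasurableSet fun g => (hinv g).eventuallyEq
  rcases eventuallyConst_set'.1 hconst with h | h
  · exact Or.inl (by simpa using measure_congr h)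
  · exact Or.inr (by simpa using measure_congr h)

section OrbitalLimit

variable {G X ι : Type*} [Group G] [MeasurableSpace G] [MulAction G X] [MetricSpace X]
  [MeasurableSpace X] [BorelSpace X] {l : Filter ι} [l.NeBot]
  {H : ι → Subgroup G} {m : ∀ i, Measure (H i)} {x₀ : X} {μ : Measure X}

theorem measure_compl_closure_orbit_eq_zero_of_tendsto [CompactSpace X] [IsFiniteMeasure μ]
    (hconv : ∀ f : C(X, ℝ),
      Tendsto (fun i => ∫ g : H i, f ((g : G) • x₀) ∂(m i)) l (𝓝 (∫ y, f y ∂μ))) :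
    μ (closure (orbit G x₀))ᶜ = 0 := by
  set Y := closure (orbit G x₀)
  let d : C(X, ℝ) := ⟨(infDist · Y), continuous_infDist_pt Y⟩
  have hd : ∫ y, d y ∂μ = 0 := by
    refine tendsto_nhds_unique (hconv d) ?_
    have hzero : ∀ i (g : H i), d ((g : G) • x₀) = 0 := fun i g =>
      infDist_zero_of_mem (subset_closure (mem_orbit x₀ (g : G)))
    simp only [hzero, integral_zero]
    exact tendsto_const_nhds
  have hae := (integral_eq_zero_iff_of_nonneg (fun _ => infDist_nonneg)
    (d.continuous.integrable_of_hasCompactSupport (.of_compactSpace _))).1 hd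
  rw [EventuallyEq, ae_iff] at hae
  convert hae using 2
  ext x
  exact not_congr (isClosed_closure.mem_iff_infDist_zero ⟨x₀, subset_closure (mem_orbit_self x₀)⟩)

theorem smulInvariantMeasure_of_tendsto [ContinuousConstSMul G X]
    [∀ i, IsProbabilityMeasure (m i)] [IsFiniteMeasure μ] (hH : ∀ g : G, ∀ᶠ i in l, g ∈ H i)
    (hm : ∀ i (h : H i), (m i).map (h * ·) = m i)
    (hconv : ∀ f : C(X, ℝ),
      Tendsto (fun i => ∫ g : H i, f ((g : G) • x₀) ∂(m i)) l (𝓝 (∫ y, f y ∂μ))) :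
    SMulInvariantMeasure G X μ := by
  refine ⟨fun g s hs => ?_⟩
  rw [← Measure.map_apply (measurable_const_smul g) hs]
  congr 1
  refine ext_of_forall_integral_eq_of_IsFiniteMeasure fun f => ?_
  rw [integral_map (measurable_const_smul g).aemeasurable f.continuous.aestronglyMeasurable]
  let F : C(X, ℝ) := f.toContinuousMap.comp ⟨(g • ·), continuous_const_smul g⟩
  refine tendsto_nhds_unique ((hconv F).congr' ?_) (hconv f.toContinuousMap)
  filter_upwards [hH g] with i hg
  have := integral_comp_mul_left_of_map_eq (hm i) ⟨g, hg⟩ fun k => f ((k : G) • x₀)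
  simpa [F, mul_smul] using this

end OrbitalLimit

section IsometricAction

variable {G X : Type*} [Group G] [MulAction G X] [PseudoMetricSpace X] [IsIsometricSMul G X]

theorem mem_closure_orbit_symm {x y : X} (h : y ∈ closure (orbit G x)) :
    x ∈ closure (orbit G y) := by
  rw [Metric.mem_closure_iff] at h ⊢
  intro ε hε
  obtain ⟨_, ⟨g, rfl⟩, hg⟩ := h ε hε
  refine ⟨g⁻¹ • y, mem_orbit _ _, ?_⟩
  rwa [← dist_smul g, smul_inv_smul, dist_comm]

theorem closure_orbit_subset_of_mem {x y : X} (h : y ∈ closure (orbit G x)) :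
    closure (orbit G x) ⊆ closure (orbit G y) := by
  refine closure_minimal ?_ isClosed_closure
  rintro _ ⟨g, rfl⟩
  exact smul_closure_orbit_subset g y (Set.smul_mem_smul_set (mem_closure_orbit_symm h))

end IsometricAction

section TranslateHull

variable {X : Type*}

def translateHull (G : Type*) [SMul G X] (f : X → ℝ) : Set (X → ℝ) :=
  convexHull ℝ (Set.range fun g : G => fun x => f (g • x))

variable {G : Type*} [Group G] [MulAction G X] {f ψ : X → ℝ}

theorem self_mem_translateHull : f ∈ translateHull G f :=
  subset_convexHull ℝ _ ⟨1, by simp⟩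

theorem comp_smul_mem_translateHull (hψ : ψ ∈ translateHull G f) (g : G) :
    (fun x => ψ (g • x)) ∈ translateHull G f := by
  have hT : (LinearMap.funLeft ℝ ℝ (g • · : X → X)) '' Set.range (fun h : G => fun x => f (h • x))
      ⊆ Set.range fun h : G => fun x => f (h • x) := by
    rintro _ ⟨_, ⟨h, rfl⟩, rfl⟩
    exact ⟨h * g, funext fun x => by simp [LinearMap.funLeft, mul_smul]⟩
  refine convexHull_mono hT ?_
  rw [← LinearMap.image_convexHull]
  exact ⟨ψ, hψ, rfl⟩

theorem continuous_of_mem_translateHull [TopologicalSpace X] [ContinuousConstSMul G X]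
    (hf : Continuous f) (hψ : ψ ∈ translateHull G f) : Continuous ψ := by
  refine convexHull_min ?_ ?_ hψ (t := {ψ | Continuous ψ})
  · rintro _ ⟨g, rfl⟩
    exact hf.comp (continuous_const_smul g)
  · intro ψ₁ h₁ ψ₂ h₂ a b _ _ _
    exact (h₁.const_smul a).add (h₂.const_smul b)

theorem sub_le_of_mem_translateHull [PseudoMetricSpace X] [IsIsometricSMul G X] {r δ : ℝ}
    (hf : ∀ a b, dist a b < r → f a - f b ≤ δ) (hψ : ψ ∈ translateHull G f) {a b : X}
    (hab : dist a b < r) : ψ a - ψ b ≤ δ := by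
  refine convexHull_min ?_ ?_ hψ (t := {ψ | ∀ a b, dist a b < r → ψ a - ψ b ≤ δ}) a b hab
  · rintro _ ⟨g, rfl⟩ a b hab
    exact hf _ _ (by rwa [dist_smul])
  · intro ψ₁ h₁ ψ₂ h₂ s t hs ht hst a b hab
    calc (s • ψ₁ + t • ψ₂) a - (s • ψ₁ + t • ψ₂) b
        = s * (ψ₁ a - ψ₁ b) + t * (ψ₂ a - ψ₂ b) := by
          simp only [Pi.add_apply, Pi.smul_apply, smul_eq_mul]; ring
      _ ≤ s * δ + t * δ := by gcongr <;> [exact h₁ a b hab; exact h₂ a b hab]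
      _ = δ := by rw [← add_mul, hst, one_mul]

theorem integral_eq_of_mem_translateHull [MeasurableSpace X] [MeasurableConstSMul G X]
    {κ : Measure X} [SMulInvariantMeasure G X κ] (hf : Integrable f κ)
    (hψ : ψ ∈ translateHull G f) : ∫ x, ψ x ∂κ = ∫ x, f x ∂κ := by
  refine (convexHull_min ?_ ?_ hψ (t := {ψ | Integrable ψ κ ∧ ∫ x, ψ x ∂κ = ∫ x, f x ∂κ})).2
  · rintro _ ⟨g, rfl⟩
    exact ⟨(measurePreserving_smul g κ).integrable_comp_of_integrable hf,
      integral_smul_eq_self f⟩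
  · rintro ψ₁ ⟨hi₁, he₁⟩ ψ₂ ⟨hi₂, he₂⟩ a b _ _ hab
    refine ⟨(hi₁.smul a).add (hi₂.smul b), ?_⟩
    simp only [Pi.add_apply, Pi.smul_apply, smul_eq_mul]
    rw [integral_add (hi₁.const_mul a) (hi₂.const_mul b), integral_const_mul, integral_const_mul,
      he₁, he₂, ← add_mul, hab, one_mul]

end TranslateHull

theorem abs_integral_sub_le_of_forall_sub_le {X : Type*} [MeasurableSpace X] {κ : Measure X}
    [IsProbabilityMeasure κ] {ψ : X → ℝ} (hψ : Integrable ψ κ) {Y : Set X} (hY : κ Yᶜ = 0)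
    {x₀ : X} (hx₀ : x₀ ∈ Y) {ε : ℝ} (hosc : ∀ y ∈ Y, ∀ z ∈ Y, ψ y - ψ z ≤ ε) :
    |∫ x, ψ x ∂κ - ψ x₀| ≤ ε := by
  have hae : ∀ᵐ x ∂κ, ‖ψ x - ψ x₀‖ ≤ ε := by
    filter_upwards [mem_ae_iff.2 hY] with x hx
    exact abs_sub_le_iff.2 ⟨hosc x hx x₀ hx₀, hosc x₀ hx₀ x hx⟩
  simpa [integral_sub hψ (integrable_const _)] using norm_integral_le_of_norm_le_const hae

section UniqueErgodicity

variable {G X : Type*} [Group G] [MulAction G X] [PseudoMetricSpace X] [CompactSpace X]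
  [IsIsometricSMul G X] {f : X → ℝ}

/-- Once the minimum point of `ψ` is translated near each centre of the `r/2`-net `t`, at every
point of the orbit closure one of the `#t` averaged translates of `ψ` is within `δ` of the
minimum, and the others are controlled by `D`. -/
theorem exists_mem_translateHull_sub_le_contract (hf : Continuous f) {x₀ : X} {r δ : ℝ}
    (hr : 0 < r) (hfr : ∀ a b, dist a b < r → f a - f b ≤ δ) {t : Finset X} (ht : t.Nonempty)
    (htY : ↑t ⊆ closure (orbit G x₀)) (hcover : closure (orbit G x₀) ⊆ ⋃ w ∈ t, ball w (r / 2))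
    {D : ℝ} (hD : ∃ ψ ∈ translateHull G f,
      ∀ y ∈ closure (orbit G x₀), ∀ z ∈ closure (orbit G x₀), ψ y - ψ z ≤ D) :
    ∃ ψ ∈ translateHull G f, ∀ y ∈ closure (orbit G x₀), ∀ z ∈ closure (orbit G x₀),
      ψ y - ψ z ≤ δ + (1 - (#t : ℝ)⁻¹) * (D - δ) := by
  set Y := closure (orbit G x₀)
  obtain ⟨ψ, hψ, hψD⟩ := hD
  have hYsmul : ∀ (g : G), ∀ y ∈ Y, g • y ∈ Y := fun g y hy =>
    smul_closure_orbit_subset g x₀ (Set.smul_mem_smul_set hy)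
  obtain ⟨ys, hys, hmin⟩ := (isClosed_closure (s := orbit G x₀)).isCompact.exists_isMinOn
    ⟨x₀, subset_closure (mem_orbit_self x₀)⟩ (continuous_of_mem_translateHull hf hψ).continuousOn
  have hnear : ∀ w ∈ t, ∃ g : G, dist w (g • ys) < r / 2 := fun w hw => by
    obtain ⟨_, ⟨g, rfl⟩, hg⟩ := Metric.mem_closure_iff.1
      (closure_orbit_subset_of_mem hys (htY hw)) (r / 2) (half_pos hr)
    exact ⟨g, hg⟩
  choose! g hg using hnear
  have hcard : (0 : ℝ) < #t := Nat.cast_pos.2 ht.card_pos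
  refine ⟨∑ w ∈ t, (#t : ℝ)⁻¹ • fun x => ψ ((g w)⁻¹ • x), ?_, fun y hy z hz => ?_⟩
  · refine (convex_convexHull ℝ _).sum_mem (fun _ _ => by positivity) ?_
      fun w _ => comp_smul_mem_translateHull hψ _
    rw [Finset.sum_const, nsmul_eq_mul, mul_inv_cancel₀ hcard.ne']
  obtain ⟨w₀, hw₀, hyw₀⟩ := Set.mem_iUnion₂.1 (hcover hy)
  have hclose : dist ((g w₀)⁻¹ • y) ys < r := by
    rw [← dist_smul (g w₀), smul_inv_smul]
    calc dist y (g w₀ • ys) ≤ dist y w₀ + dist w₀ (g w₀ • ys) := dist_triangle _ _ _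
      _ < r / 2 + r / 2 := add_lt_add (mem_ball.1 hyw₀) (hg w₀ hw₀)
      _ = r := add_halves r
  have hsum := Finset.sum_le_add_card_sub_one_mul hw₀
    (a := fun w => ψ ((g w)⁻¹ • y) - ψ ((g w)⁻¹ • z)) (δ := δ) (D := D)
    (by linarith [sub_le_of_mem_translateHull hfr hψ hclose,
      isMinOn_iff.1 hmin _ (hYsmul (g w₀)⁻¹ z hz)])
    fun w _ => hψD _ (hYsmul _ y hy) _ (hYsmul _ z hz)
  simp only [Finset.sum_apply, Pi.smul_apply, smul_eq_mul, ← Finset.mul_sum, ← mul_sub,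
    ← Finset.sum_sub_distrib]
  calc _ ≤ (#t : ℝ)⁻¹ * (δ + (#t - 1) * D) := mul_le_mul_of_nonneg_left hsum (by positivity)
    _ = _ := by field_simp; ring

theorem exists_mem_translateHull_sub_le (hf : Continuous f) (x₀ : X) {ε : ℝ} (hε : 0 < ε) :
    ∃ ψ ∈ translateHull G f,
      ∀ y ∈ closure (orbit G x₀), ∀ z ∈ closure (orbit G x₀), ψ y - ψ z ≤ ε := by
  set Y := closure (orbit G x₀)
  have hY : IsCompact Y := isClosed_closure.isCompact
  have hx₀ : x₀ ∈ Y := subset_closure (mem_orbit_self x₀)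
  obtain ⟨r, hr, hfr⟩ : ∃ r > 0, ∀ a b : X, dist a b < r → f a - f b ≤ ε / 2 := by
    obtain ⟨r, hr, h⟩ := Metric.uniformContinuous_iff.1
      (CompactSpace.uniformContinuous_of_continuous hf) (ε / 2) (half_pos hε)
    exact ⟨r, hr, fun a b hab => (le_abs_self _).trans (h hab).le⟩
  obtain ⟨t, htY, htfin, hcover⟩ := hY.finite_cover_balls (half_pos hr)
  lift t to Finset X using htfin
  have ht : t.Nonempty := by
    obtain ⟨w, hw, -⟩ := Set.mem_iUnion₂.1 (hcover hx₀)
    exact ⟨w, hw⟩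
  obtain ⟨ymax, -, hmax⟩ := hY.exists_isMaxOn ⟨x₀, hx₀⟩ hf.continuousOn
  obtain ⟨ymin, -, hmin⟩ := hY.exists_isMinOn ⟨x₀, hx₀⟩ hf.continuousOn
  obtain ⟨D, hDε, ψ, hψ, hψD⟩ := exists_le_of_forall_imp_contraction
    (P := fun D => ∃ ψ ∈ translateHull G f, ∀ y ∈ Y, ∀ z ∈ Y, ψ y - ψ z ≤ D)
    (sub_nonneg.2 (inv_le_one_of_one_le₀ (Nat.one_le_cast.2 ht.card_pos)))
    (sub_lt_self _ (inv_pos.2 (Nat.cast_pos.2 ht.card_pos)))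
    ⟨f, self_mem_translateHull, fun y hy z hz =>
      sub_le_sub (isMaxOn_iff.1 hmax y hy) (isMinOn_iff.1 hmin z hz)⟩
    (fun D hD => exists_mem_translateHull_sub_le_contract hf hr hfr ht htY hcover hD)
    (half_lt_self hε)
  exact ⟨ψ, hψ, fun y hy z hz => (hψD y hy z hz).trans hDε⟩

variable [MeasurableSpace X] [BorelSpace X]

theorem eq_of_smulInvariantMeasure_of_measure_compl_closure_orbit (x₀ : X)
    {κ₁ κ₂ : Measure X} [IsProbabilityMeasure κ₁] [IsProbabilityMeasure κ₂]
    [SMulInvariantMeasure G X κ₁] [SMulInvariantMeasure G X κ₂]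
    (h₁ : κ₁ (closure (orbit G x₀))ᶜ = 0) (h₂ : κ₂ (closure (orbit G x₀))ᶜ = 0) : κ₁ = κ₂ := by
  refine ext_of_forall_integral_eq_of_IsFiniteMeasure fun f => eq_of_forall_dist_le fun ε hε => ?_
  obtain ⟨ψ, hψ, hosc⟩ := exists_mem_translateHull_sub_le (G := G) f.continuous x₀ (half_pos hε)
  have hclose : ∀ (κ : Measure X) [IsProbabilityMeasure κ] [SMulInvariantMeasure G X κ],
      κ (closure (orbit G x₀))ᶜ = 0 → |∫ x, f x ∂κ - ψ x₀| ≤ ε / 2 := fun κ _ _ hκ => by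
    rw [← integral_eq_of_mem_translateHull (f.integrable κ) hψ]
    exact abs_integral_sub_le_of_forall_sub_le
      ((continuous_of_mem_translateHull f.continuous hψ).integrable_of_hasCompactSupport
        (.of_compactSpace _)) hκ (subset_closure (mem_orbit_self x₀)) hosc
  calc dist (∫ x, f x ∂κ₁) (∫ x, f x ∂κ₂)
      ≤ |∫ x, f x ∂κ₁ - ψ x₀| + |∫ x, f x ∂κ₂ - ψ x₀| := by
        rw [Real.dist_eq, abs_sub_comm (∫ x, f x ∂κ₂)]
        exact abs_sub_le _ _ _
    _ ≤ ε / 2 + ε / 2 := add_le_add (hclose κ₁ h₁) (hclose κ₂ h₂)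
    _ = ε := add_halves ε

theorem ergodicSMul_of_measure_compl_closure_orbit_eq_zero {x₀ : X} {μ : Measure X}
    [IsProbabilityMeasure μ] [SMulInvariantMeasure G X μ] (hμ : μ (closure (orbit G x₀))ᶜ = 0) :
    ErgodicSMul G X μ :=
  .of_forall_eq_of_absolutelyContinuous fun _ _ _ hνμ =>
    eq_of_smulInvariantMeasure_of_measure_compl_closure_orbit x₀ (hνμ hμ) hμ

end UniqueErgodicity

theorem weak_limit_point_of_orbital_measures_ergodic_general
    {G X : Type*} [Group G] [MeasurableSpace G]
    [MetricSpace X] [CompactSpace X] [MeasurableSpace X] [BorelSpace X] [MulAction G X]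
    (hiso : ∀ g : G, Isometry (fun x : X => g • x))
    (K : ℕ → Subgroup G) (hmono : Monotone K)
    (hunion : ∀ g : G, ∃ n, g ∈ K n)
    (m : ∀ n, Measure (K n)) (hprob : ∀ n, IsProbabilityMeasure (m n))
    (hhaar : ∀ n (h : K n), Measure.map (fun g => h * g) (m n) = m n)
    (x₀ : X) (μ : Measure X) (hμ : IsProbabilityMeasure μ)
    (φ : ℕ → ℕ) (hφ : StrictMono φ)
    (hconv : ∀ f : C(X, ℝ),
      Tendsto (fun i => ∫ g : K (φ i), f ((g : G) • x₀) ∂(m (φ i))) atTop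
        (𝓝 (∫ y, f y ∂μ))) :
    (∀ (g : G) (S : Set X), MeasurableSet S → μ ((fun y => g • y) ⁻¹' S) = μ S) ∧
      (∀ S : Set X, MeasurableSet S → (∀ g : G, (fun y => g • y) ⁻¹' S = S) →
        μ S = 0 ∨ μ S = 1) := by
  have : IsIsometricSMul G X := ⟨hiso⟩
  have hK : ∀ g : G, ∀ᶠ i in atTop, g ∈ K (φ i) := fun g => by
    obtain ⟨n, hn⟩ := hunion g
    filter_upwards [hφ.tendsto_atTop.eventually_ge_atTop n] with i hi using hmono hi hn
  have : SMulInvariantMeasure G X μ :=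
    smulInvariantMeasure_of_tendsto (m := fun i => m (φ i)) hK (fun i => hhaar (φ i)) hconv
  have : ErgodicSMul G X μ := ergodicSMul_of_measure_compl_closure_orbit_eq_zero
    (measure_compl_closure_orbit_eq_zero_of_tendsto hconv)
  exact ⟨fun g S hS => SMulInvariantMeasure.measure_preimage_smul g hS,
    fun S hS hinv => ErgodicSMul.measure_eq_zero_or_one hS hinv⟩

/-- Let the union `K(∞) = ⋃ K n` of an increasing chain of compact subgroups act
by isometric homeomorphisms on a compact metric space `X`. If `μ` is a weak limit point of the
orbital measures `μ_n^{x₀}`, then `μ` is `K(∞)`-invariant and ergodic. -/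
theorem weak_limit_point_of_orbital_measures_ergodic
    {G X : Type*} [Group G] [TopologicalSpace G] [IsTopologicalGroup G] [MeasurableSpace G]
    [MetricSpace X] [CompactSpace X] [MeasurableSpace X] [BorelSpace X] [MulAction G X]
    (hiso : ∀ g : G, Isometry (fun x : X => g • x))
    (K : ℕ → Subgroup G) (hmono : Monotone K)
    (hcpt : ∀ n, IsCompact ((K n : Set G)))
    (hunion : ∀ g : G, ∃ n, g ∈ K n)
    (m : ∀ n, Measure (K n)) (hprob : ∀ n, IsProbabilityMeasure (m n))
    (hhaar : ∀ n (h : K n), Measure.map (fun g => h * g) (m n) = m n)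
    (x₀ : X) (μ : Measure X) (hμ : IsProbabilityMeasure μ)
    (φ : ℕ → ℕ) (hφ : StrictMono φ)
    (hconv : ∀ f : C(X, ℝ),
      Tendsto (fun i => ∫ g : K (φ i), f ((g : G) • x₀) ∂(m (φ i))) atTop
        (𝓝 (∫ y, f y ∂μ))) :
    (∀ (g : G) (S : Set X), MeasurableSet S → μ ((fun y => g • y) ⁻¹' S) = μ S) ∧
      (∀ S : Set X, MeasurableSet S → (∀ g : G, (fun y => g • y) ⁻¹' S = S) →
        μ S = 0 ∨ μ S = 1) :=
  weak_limit_point_of_orbital_measures_ergodic_general hiso K hmono hunion m hprob hhaar x₀ μ hμ φ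
    hφ hconv
end

section
/- Let X be a compact metric space on which the inductive limit K(∞) of an increasing chain of compact groups acts by isometric homeomorphisms. If (x_n) converges in X and μ is a weak limit point of the sequence of orbital measures (μ_n^{x_n}), then μ is an ergodic K(∞)-invariant probability measure. -/
/-!
Invariance: a fixed `g` lies in `K n` for all large `n`, and the Haar measure of `K n` is invariant
under left translation by `g`, so the orbital integrals of `f ∘ (g • ·)` and of `f` eventually
agree; in the limit, `μ` is `g`-invariant.

Ergodicity: the orbital integrals of a `G`-invariant continuous `F` are the values `F (x n)`, so
`∫ F ∂μ = F x₀`; applied to `(F - F x₀) ^ 2` this makes `F` a.e. constant. Given an invariant set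
`S`, approximate `𝟙_S` in `L¹(μ)` by a continuous `f`. Since the action is isometric, the translates
of `f` form a totally bounded set, and `G` acts by affine isometries on its closed convex hull; by
Kakutani's fixed point theorem the hull contains an invariant, hence a.e. constant, function. As
`𝟙_S` and `μ` are invariant, every point of the hull is as close to `𝟙_S` as `f` is. So `𝟙_S` lies
in the closure of the constants, which is the (finite-dimensional) space of constants itself.
-/

open MeasureTheory Filter Topology
open scoped BoundedContinuousFunction

section Kakutani

variable {E : Type*} [NormedAddCommGroup E] [NormedSpace ℝ E] {M : Type*} [Group M]

structure IsInvariantCompactConvex (ρ : M →* E ≃ᵃⁱ[ℝ] E) (C : Set E) : Prop where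
  nonempty : C.Nonempty
  isCompact : IsCompact C
  convex : Convex ℝ C
  mapsTo : ∀ c, Set.MapsTo (ρ c) C C

variable {ρ : M →* E ≃ᵃⁱ[ℝ] E}

namespace IsInvariantCompactConvex

theorem exists_minimal {C : Set E} (hC : IsInvariantCompactConvex ρ C) :
    ∃ m ⊆ C, Minimal (IsInvariantCompactConvex ρ) m := by
  refine zorn_superset_nonempty {C | IsInvariantCompactConvex ρ C} ?_ C hC
  intro 𝒦 h𝒦 hchain ⟨K₀, hK₀⟩
  have : Nonempty 𝒦 := ⟨⟨K₀, hK₀⟩⟩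
  have hdir : DirectedOn (· ⊇ ·) 𝒦 := fun a ha b hb =>
    (hchain.total ha hb).elim (fun h => ⟨a, ha, subset_rfl, h⟩) (fun h => ⟨b, hb, h, subset_rfl⟩)
  refine ⟨⋂₀ 𝒦, ⟨?_, ?_, ?_, ?_⟩, fun K hK => Set.sInter_subset_of_mem hK⟩
  · exact IsCompact.nonempty_sInter_of_directed_nonempty_isCompact_isClosed hdir
      (fun K hK => (h𝒦 hK).nonempty) (fun K hK => (h𝒦 hK).isCompact)
      (fun K hK => (h𝒦 hK).isCompact.isClosed)
  · exact (h𝒦 hK₀).isCompact.of_isClosed_subset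
      (isClosed_sInter fun K hK => (h𝒦 hK).isCompact.isClosed) (Set.sInter_subset_of_mem hK₀)
  · exact convex_sInter fun K hK => (h𝒦 hK).convex
  · exact fun c y hy => Set.mem_sInter.2 fun K hK => (h𝒦 hK).mapsTo c (Set.mem_sInter.1 hy K hK)

theorem image_eq_of_minimal {m : Set E} (hm : Minimal (IsInvariantCompactConvex ρ) m) (c : M) :
    ρ c '' m = m := by
  refine hm.eq_of_subset ⟨hm.prop.nonempty.image _, hm.prop.isCompact.image (ρ c).continuous,
    hm.prop.convex.affine_image (ρ c).toAffineMap, ?_⟩ (hm.prop.mapsTo c).image_subset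
  rintro c' _ ⟨y, hy, rfl⟩
  refine ⟨ρ (c⁻¹ * c' * c) y, hm.prop.mapsTo _ hy, ?_⟩
  simp [map_mul, AffineIsometryEquiv.coe_mul]

theorem sep_forall_dist_le {m : Set E} (hm : IsInvariantCompactConvex ρ m)
    (himage : ∀ c, ρ c '' m = m) {z : E} (hz : z ∈ m) {r : ℝ} (hzr : ∀ y ∈ m, dist z y ≤ r) :
    IsInvariantCompactConvex ρ {w ∈ m | ∀ y ∈ m, dist w y ≤ r} := by
  have hcenters : {w ∈ m | ∀ y ∈ m, dist w y ≤ r} = m ∩ ⋂ y ∈ m, Metric.closedBall y r := by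
    ext w; simp
  refine ⟨⟨z, hz, hzr⟩, ?_, ?_, ?_⟩
  · rw [hcenters]
    exact hm.isCompact.inter_right (isClosed_biInter fun y _ => Metric.isClosed_closedBall)
  · rw [hcenters]
    exact hm.convex.inter (convex_iInter₂ fun y _ => convex_closedBall y r)
  · rintro c w ⟨hw, hwr⟩
    refine ⟨hm.mapsTo c hw, ?_⟩
    rw [← himage c]
    rintro _ ⟨y, hy, rfl⟩
    simpa using hwr y hy

end IsInvariantCompactConvex

theorem dist_inv_card_smul_sum_le {s : Finset E} {y y₀ : E} {d : ℝ} (hy₀ : y₀ ∈ s)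
    (hfar : ∀ p ∈ s, dist p y ≤ d) (hnear : dist y₀ y ≤ d / 2) :
    dist ((s.card : ℝ)⁻¹ • ∑ p ∈ s, p) y ≤ d - d / (2 * s.card) := by
  classical
  have hn : (0 : ℝ) < s.card := by exact_mod_cast Finset.card_pos.2 ⟨y₀, hy₀⟩
  have hsum : ∑ p ∈ s, dist p y ≤ s.card * d - d / 2 := by
    have hrest : ∑ p ∈ s.erase y₀, dist p y ≤ (s.card - 1) * d := by
      calc ∑ p ∈ s.erase y₀, dist p y ≤ ∑ _p ∈ s.erase y₀, d :=
            Finset.sum_le_sum fun p hp => hfar p (Finset.mem_of_mem_erase hp)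
        _ = (s.card - 1) * d := by
            rw [Finset.sum_const, Finset.card_erase_of_mem hy₀, nsmul_eq_mul,
              Nat.cast_sub (Finset.card_pos.2 ⟨y₀, hy₀⟩), Nat.cast_one]
    rw [← Finset.add_sum_erase s _ hy₀]
    linarith
  have hcentroid : (s.card : ℝ)⁻¹ • ∑ p ∈ s, p - y = (s.card : ℝ)⁻¹ • ∑ p ∈ s, (p - y) := by
    rw [Finset.sum_sub_distrib, Finset.sum_const, smul_sub, ← Nat.cast_smul_eq_nsmul ℝ,
      smul_smul, inv_mul_cancel₀ hn.ne', one_smul]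
  calc dist ((s.card : ℝ)⁻¹ • ∑ p ∈ s, p) y = (s.card : ℝ)⁻¹ * ‖∑ p ∈ s, (p - y)‖ := by
        rw [dist_eq_norm, hcentroid, norm_smul, Real.norm_of_nonneg (by positivity)]
    _ ≤ (s.card : ℝ)⁻¹ * (s.card * d - d / 2) := by
        gcongr
        simp only [dist_eq_norm] at hsum
        exact (norm_sum_le _ _).trans hsum
    _ = d - d / (2 * s.card) := by field_simp

/-- Normal structure of compact convex sets. The witness is the barycentre of a finite
`diam / 2`-net. -/
theorem IsCompact.exists_forall_dist_le_lt_diam {m : Set E} (hm : IsCompact m) (hconv : Convex ℝ m)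
    (hd : 0 < Metric.diam m) : ∃ z ∈ m, ∃ r < Metric.diam m, ∀ y ∈ m, dist z y ≤ r := by
  classical
  obtain ⟨t, htm, htf, hcover⟩ := hm.finite_cover_balls (half_pos hd)
  set s := htf.toFinset
  obtain ⟨y₀, hy₀⟩ : s.Nonempty := by
    rcases m.eq_empty_or_nonempty with rfl | ⟨y, hy⟩
    · simp at hd
    obtain ⟨y₀, hy₀, -⟩ := Set.mem_iUnion₂.1 (hcover hy)
    exact ⟨y₀, htf.mem_toFinset.2 hy₀⟩
  have hsm : ∀ p ∈ s, p ∈ m := fun p hp => htm (htf.mem_toFinset.1 hp)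
  have hn : (0 : ℝ) < s.card := by exact_mod_cast Finset.card_pos.2 ⟨y₀, hy₀⟩
  refine ⟨(s.card : ℝ)⁻¹ • ∑ p ∈ s, p, ?_, Metric.diam m - Metric.diam m / (2 * s.card),
    by linarith [show 0 < Metric.diam m / (2 * s.card) by positivity], fun y hy => ?_⟩
  · rw [Finset.smul_sum]
    exact hconv.sum_mem (fun _ _ => by positivity) (by simp [hn.ne']) hsm
  · obtain ⟨p, hp, hyp⟩ := Set.mem_iUnion₂.1 (hcover hy)
    refine dist_inv_card_smul_sum_le (htf.mem_toFinset.2 hp)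
      (fun q hq => Metric.dist_le_diam_of_mem hm.isBounded (hsm q hq) hy) ?_
    rw [dist_comm]
    exact (Metric.mem_ball.1 hyp).le

/-- **Kakutani's fixed point theorem** for groups of affine isometries. A minimal invariant compact
convex set is a point: otherwise, by normal structure, its points lying within some `r < diam` of
all its points would form a smaller one. -/
theorem IsInvariantCompactConvex.exists_fixedPoint {C : Set E}
    (hC : IsInvariantCompactConvex ρ C) : ∃ x ∈ C, ∀ c, ρ c x = x := by
  obtain ⟨m, hmC, hm⟩ := hC.exists_minimal
  have hsub : m.Subsingleton := by
    by_contra hnot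
    obtain ⟨a, ha, b, hb, hab⟩ := Set.not_subsingleton_iff.1 hnot
    have hd : 0 < Metric.diam m :=
      (dist_pos.2 hab).trans_le (Metric.dist_le_diam_of_mem hm.prop.isCompact.isBounded ha hb)
    obtain ⟨z, hz, r, hr, hzr⟩ := hm.prop.isCompact.exists_forall_dist_le_lt_diam hm.prop.convex hd
    have hcenters := hm.eq_of_subset
      (hm.prop.sep_forall_dist_le (image_eq_of_minimal hm) hz hzr) (Set.sep_subset _ _)
    have : Metric.diam m ≤ r := Metric.diam_le_of_forall_dist_le (dist_self z ▸ hzr z hz)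
      fun w hw y hy => (hcenters.symm ▸ hw : w ∈ {w ∈ m | ∀ y ∈ m, dist w y ≤ r}).2 y hy
    linarith
  obtain ⟨x, hx⟩ := hm.prop.nonempty
  exact ⟨x, hmC hx, fun c => hsub (hm.prop.mapsTo c hx) hx⟩

theorem exists_fixedPoint_mem_closure_convexHull [CompleteSpace E] {x : E}
    (hx : TotallyBounded (Set.range fun c => ρ c x)) :
    ∃ y ∈ closure (convexHull ℝ (Set.range fun c => ρ c x)), ∀ c, ρ c y = y := by
  refine IsInvariantCompactConvex.exists_fixedPoint
    ⟨⟨ρ 1 x, subset_closure (subset_convexHull ℝ _ ⟨1, rfl⟩)⟩,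
      (totallyBounded_convexHull.2 hx).closure.isCompact_of_isClosed isClosed_closure,
      (convex_convexHull ℝ _).closure, fun c => ?_⟩
  refine Set.MapsTo.closure (fun y hy => ?_) (ρ c).continuous
  have hmaps : Set.MapsTo (ρ c) (Set.range fun c => ρ c x) (Set.range fun c => ρ c x) := by
    rintro _ ⟨c', rfl⟩
    exact ⟨c * c', by simp [map_mul, AffineIsometryEquiv.coe_mul]⟩
  have := AffineMap.image_convexHull (ρ c).toAffineMap (Set.range fun c => ρ c x)
  exact convexHull_mono hmaps.image_subset (this ▸ Set.mem_image_of_mem _ hy)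

end Kakutani

theorem ContinuousMap.norm_comp_of_surjective {X Y E : Type*} [TopologicalSpace X] [CompactSpace X]
    [TopologicalSpace Y] [CompactSpace Y] [NormedAddCommGroup E] (f : C(Y, E)) {g : C(X, Y)}
    (hg : Function.Surjective g) : ‖f.comp g‖ = ‖f‖ := by
  simp only [ContinuousMap.norm_eq_iSup_norm, ContinuousMap.comp_apply]
  exact hg.iSup_comp fun y => ‖f y‖

section Translation

variable (G X : Type*) [Group G] [TopologicalSpace X] [CompactSpace X] [MulAction G X]
  [ContinuousConstSMul G X]

noncomputable def translationAction : G →* C(X, ℝ) ≃ᵃⁱ[ℝ] C(X, ℝ) where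
  toFun c := LinearIsometryEquiv.toAffineIsometryEquiv
    { toLinearEquiv := (Homeomorph.smul c⁻¹).compStarAlgEquiv' ℝ ℝ |>.toAlgEquiv.toLinearEquiv
      norm_map' := fun F => F.norm_comp_of_surjective (MulAction.surjective c⁻¹) }
  map_one' := by ext; simp
  map_mul' c c' := by
    ext F y
    change F ((c * c')⁻¹ • y) = F (c'⁻¹ • c⁻¹ • y)
    rw [mul_inv_rev, mul_smul]

variable {G X}

@[simp]
theorem translationAction_apply (c : G) (F : C(X, ℝ)) (y : X) :
    translationAction G X c F y = F (c⁻¹ • y) :=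
  rfl

end Translation

section Metric

variable {G X : Type*} [Group G] [MetricSpace X] [CompactSpace X] [MulAction G X]
  [IsIsometricSMul G X]

theorem totallyBounded_range_translationAction (f : C(X, ℝ)) :
    TotallyBounded (Set.range fun c => translationAction G X c f) := by
  set e := ContinuousMap.isometryEquivBoundedOfCompact X ℝ
  have hequi : UniformEquicontinuous fun c : G => ⇑(translationAction G X c f) := by
    rw [Metric.uniformEquicontinuous_iff]
    intro ε hε
    obtain ⟨δ, hδ, hf⟩ := Metric.uniformContinuous_iff.1
      (CompactSpace.uniformContinuous_of_continuous f.continuous) ε hε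
    exact ⟨δ, hδ, fun y y' hyy' c => hf (by simpa [dist_smul] using hyy')⟩
  have hA := BoundedContinuousFunction.arzela_ascoli (Metric.closedBall (0 : ℝ) ‖f‖)
    (isCompact_closedBall _ _) (e '' Set.range fun c => translationAction G X c f) ?_ ?_
  · refine (hA.image e.symm.continuous).totallyBounded.subset ?_
    rintro _ ⟨c, rfl⟩
    exact ⟨e (translationAction G X c f), subset_closure ⟨_, ⟨c, rfl⟩, rfl⟩, e.symm_apply_apply _⟩
  · rintro _ y ⟨_, ⟨c, rfl⟩, rfl⟩
    simpa [e] using f.norm_coe_le_norm (c⁻¹ • y)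
  · intro x U hU
    filter_upwards [hequi.equicontinuous x U hU] with y hy
    rintro ⟨_, ⟨_, ⟨c, rfl⟩, rfl⟩⟩
    exact hy c

end Metric

theorem ContinuousMap.toLp_comp_of_measurePreserving {X E : Type*} [TopologicalSpace X]
    [CompactSpace X] [MeasurableSpace X] [BorelSpace X] [NormedAddCommGroup E] [NormedSpace ℝ E]
    [SecondCountableTopologyEither X E] {μ : Measure X} [IsFiniteMeasure μ] {p : ENNReal}
    [Fact (1 ≤ p)] (F : C(X, E)) {T : C(X, X)} (hT : MeasurePreserving T μ μ) :
    ContinuousMap.toLp p μ ℝ (F.comp T) =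
      Lp.compMeasurePreserving T hT (ContinuousMap.toLp p μ ℝ F) := by
  refine Lp.ext ((ContinuousMap.coeFn_toLp (p := p) (𝕜 := ℝ) μ _).trans ?_)
  refine (hT.quasiMeasurePreserving.ae_eq_comp
    (ContinuousMap.coeFn_toLp (p := p) (𝕜 := ℝ) μ F)).symm.trans ?_
  exact (Lp.coeFn_compMeasurePreserving _ hT).symm

theorem measure_eq_zero_or_one_of_indicator_ae_eq_const {X : Type*} [MeasurableSpace X]
    {μ : Measure X} [IsProbabilityMeasure μ] {S : Set X} {a : ℝ}
    (h : S.indicator 1 =ᵐ[μ] fun _ => a) : μ S = 0 ∨ μ S = 1 := by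
  by_cases ha : a = 1
  · right
    have hS : S =ᵐ[μ] (Set.univ : Set X) := by
      refine ae_eq_univ.2 (measure_eq_zero_iff_ae_notMem.2 ?_)
      filter_upwards [h] with y hy hyS
      simp [Set.indicator_of_notMem hyS, ha] at hy
    rw [measure_congr hS, measure_univ]
  · left
    refine measure_eq_zero_iff_ae_notMem.2 ?_
    filter_upwards [h] with y hy hyS
    simp only [Set.indicator_of_mem hyS, Pi.one_apply] at hy
    exact ha hy.symm

section Ergodic

variable {G X : Type*} [Group G] [MetricSpace X] [CompactSpace X] [MeasurableSpace X]
  [BorelSpace X] [MulAction G X] [IsIsometricSMul G X] {μ : Measure X} [IsFiniteMeasure μ]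
  {S : Set X}

theorem dist_toLp_translationAction_indicatorConstLp {p : ENNReal} [Fact (1 ≤ p)]
    (hμ : ∀ c : G, MeasurePreserving (c • ·) μ μ) (hS : MeasurableSet S)
    (hSinv : ∀ c : G, (c • ·) ⁻¹' S = S) (b : ℝ) (c : G) (f : C(X, ℝ)) :
    dist (ContinuousMap.toLp p μ ℝ (translationAction G X c f))
        (indicatorConstLp p hS (measure_ne_top μ S) b) =
      dist (ContinuousMap.toLp p μ ℝ f) (indicatorConstLp p hS (measure_ne_top μ S) b) := by
  have hT : MeasurePreserving (ContinuousMap.mk (c⁻¹ • · : X → X) (continuous_const_smul _)) μ μ :=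
    hμ c⁻¹
  have hcomp : translationAction G X c f = f.comp ⟨(c⁻¹ • ·), continuous_const_smul _⟩ := by
    ext; simp
  have hind : Lp.compMeasurePreserving _ hT (indicatorConstLp p hS (measure_ne_top μ S) b) =
      indicatorConstLp p hS (measure_ne_top μ S) b := by
    simp only [Lp.indicatorConstLp_compMeasurePreserving]
    congr 1
    exact hSinv c⁻¹
  rw [hcomp, ContinuousMap.toLp_comp_of_measurePreserving f hT]
  conv_lhs => rw [← hind]
  exact (Lp.isometry_compMeasurePreserving hT).dist_eq _ _

theorem measure_eq_zero_or_one_of_forall_ae_eq_const [IsProbabilityMeasure μ]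
    (hμ : ∀ c : G, MeasurePreserving (c • ·) μ μ)
    (hconst : ∀ F : C(X, ℝ), (∀ (c : G) y, F (c • y) = F y) → ∃ a : ℝ, F =ᵐ[μ] fun _ => a)
    (hS : MeasurableSet S) (hSinv : ∀ c : G, (c • ·) ⁻¹' S = S) : μ S = 0 ∨ μ S = 1 := by
  set u := indicatorConstLp 1 hS (measure_ne_top μ S) (1 : ℝ)
  set toLp := ContinuousMap.toLp (E := ℝ) 1 μ ℝ
  set V := LinearMap.range (Lp.constₗ (E := ℝ) 1 μ ℝ)
  have hu : u ∈ closure (V : Set (Lp ℝ 1 μ)) := by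
    refine Metric.mem_closure_iff.2 fun ε hε => ?_
    obtain ⟨f, hf⟩ := Metric.denseRange_iff.1
      (ContinuousMap.toLp_denseRange ℝ μ ℝ ENNReal.one_ne_top) u ε hε
    set B := toLp ⁻¹' Metric.closedBall u (dist (toLp f) u)
    have hB : closure (convexHull ℝ (Set.range fun c => translationAction G X c f)) ⊆ B := by
      refine closure_minimal (convexHull_min ?_ ((convex_closedBall _ _).linear_preimage
        toLp.toLinearMap)) (Metric.isClosed_closedBall.preimage toLp.continuous)
      rintro _ ⟨c, rfl⟩
      exact (dist_toLp_translationAction_indicatorConstLp hμ hS hSinv 1 c f).le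
    obtain ⟨F, hF, hFinv⟩ := exists_fixedPoint_mem_closure_convexHull
      (totallyBounded_range_translationAction (G := G) f)
    obtain ⟨a, ha⟩ := hconst F fun c y => by
      simpa only [translationAction_apply, inv_inv] using congr($(hFinv c⁻¹) y)
    have hFa : toLp F = Lp.const 1 μ a :=
      Lp.ext ((ContinuousMap.coeFn_toLp μ F).trans (ha.trans (Lp.coeFn_const 1 μ a).symm))
    refine ⟨Lp.const 1 μ a, ⟨a, rfl⟩, ?_⟩
    rw [dist_comm, ← hFa]
    exact (Metric.mem_closedBall.1 (hB hF)).trans_lt (dist_comm u (toLp f) ▸ hf)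
  rw [V.closed_of_finiteDimensional.closure_eq] at hu
  obtain ⟨a, ha⟩ := hu
  exact measure_eq_zero_or_one_of_indicator_ae_eq_const
    (indicatorConstLp_coeFn.symm.trans (ha ▸ Lp.coeFn_const 1 μ a))

end Ergodic

theorem integral_mul_left_eq_self_of_map_eq {H E : Type*} [Group H] [MeasurableSpace H]
    [NormedAddCommGroup E] [NormedSpace ℝ E] {ν : Measure H} (hν : ∀ c : H, ν.map (c * ·) = ν)
    (F : H → E) (c : H) : ∫ a, F (c * a) ∂ν = ∫ a, F a ∂ν := by
  rcases eq_or_ne ν 0 with rfl | hν0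
  · simp
  have hmul : ∀ d : H, AEMeasurable (d * ·) ν := fun d => by
    by_contra h
    exact hν0 ((hν d).symm.trans (Measure.map_of_not_aemeasurable h))
  by_cases hF : AEStronglyMeasurable F ν
  · rw [← integral_map (hmul c) ((hν c).symm ▸ hF), hν c]
  · have hFc : ¬ AEStronglyMeasurable (fun a => F (c * a)) ν := fun h => by
      have := ((hν c⁻¹).symm ▸ h : AEStronglyMeasurable _ (ν.map (c⁻¹ * ·))).comp_aemeasurable
        (hmul c⁻¹)
      exact hF (by simpa [Function.comp_def] using this)
    rw [integral_undef fun h => hFc h.aestronglyMeasurable,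
      integral_undef fun h => hF h.aestronglyMeasurable]

theorem measurePreserving_of_forall_integral_comp_eq {X : Type*} [TopologicalSpace X]
    [MeasurableSpace X] [HasOuterApproxClosed X] [BorelSpace X] {μ : Measure X} [IsFiniteMeasure μ]
    {T : X → X} (hT : Continuous T) (h : ∀ f : X →ᵇ ℝ, ∫ y, f (T y) ∂μ = ∫ y, f y ∂μ) :
    MeasurePreserving T μ μ := by
  refine ⟨hT.measurable, ext_of_forall_integral_eq_of_IsFiniteMeasure fun f => ?_⟩
  rw [integral_map hT.aemeasurable f.continuous.aestronglyMeasurable, h]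

section OrbitalMeasures

variable {G X : Type*} [Group G] [MeasurableSpace G] [TopologicalSpace X] [MeasurableSpace X]
  [MulAction G X] {K : ℕ → Subgroup G} {m : ∀ n, Measure (K n)} {x : ℕ → X} {μ : Measure X}
  {φ : ℕ → ℕ}

theorem integral_comp_smul_eq_of_tendsto [ContinuousConstSMul G X] (hmono : Monotone K)
    (hunion : ∀ g : G, ∃ n, g ∈ K n)
    (hhaar : ∀ n (h : K n), Measure.map (fun g => h * g) (m n) = m n) (hφ : StrictMono φ)
    (hconv : ∀ f : C(X, ℝ),
      Tendsto (fun i => ∫ g : K (φ i), f ((g : G) • x (φ i)) ∂(m (φ i))) atTop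
        (𝓝 (∫ y, f y ∂μ)))
    (f : C(X, ℝ)) (g : G) : ∫ y, f (g • y) ∂μ = ∫ y, f y ∂μ := by
  obtain ⟨n, hgn⟩ := hunion g
  have hshift : ∀ᶠ i in atTop, ∫ a : K (φ i), f (g • (a : G) • x (φ i)) ∂(m (φ i)) =
      ∫ a : K (φ i), f ((a : G) • x (φ i)) ∂(m (φ i)) := by
    filter_upwards [hφ.tendsto_atTop.eventually_ge_atTop n] with i hi
    have hgi : g ∈ K (φ i) := hmono hi hgn
    simpa [mul_smul] using integral_mul_left_eq_self_of_map_eq (hhaar (φ i))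
      (fun a : K (φ i) => f ((a : G) • x (φ i))) ⟨g, hgi⟩
  exact tendsto_nhds_unique ((hconv (f.comp ⟨(g • ·), continuous_const_smul g⟩)).congr' hshift)
    (hconv f)

theorem integral_eq_apply_of_tendsto [∀ n, IsProbabilityMeasure (m n)] {x₀ : X}
    (hx₀ : Tendsto x atTop (𝓝 x₀)) (hφ : StrictMono φ)
    (hconv : ∀ f : C(X, ℝ),
      Tendsto (fun i => ∫ g : K (φ i), f ((g : G) • x (φ i)) ∂(m (φ i))) atTop
        (𝓝 (∫ y, f y ∂μ)))
    {F : C(X, ℝ)} (hF : ∀ (g : G) y, F (g • y) = F y) : ∫ y, F y ∂μ = F x₀ := by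
  refine tendsto_nhds_unique (hconv F) ?_
  simpa [hF, Function.comp_def] using (F.continuous.tendsto x₀).comp (hx₀.comp hφ.tendsto_atTop)

theorem ae_eq_const_of_tendsto [CompactSpace X] [OpensMeasurableSpace X] [IsFiniteMeasure μ]
    [∀ n, IsProbabilityMeasure (m n)] {x₀ : X}
    (hx₀ : Tendsto x atTop (𝓝 x₀)) (hφ : StrictMono φ)
    (hconv : ∀ f : C(X, ℝ),
      Tendsto (fun i => ∫ g : K (φ i), f ((g : G) • x (φ i)) ∂(m (φ i))) atTop
        (𝓝 (∫ y, f y ∂μ)))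
    {F : C(X, ℝ)} (hF : ∀ (g : G) y, F (g • y) = F y) : F =ᵐ[μ] fun _ => F x₀ := by
  set D : C(X, ℝ) := (F - ContinuousMap.const X (F x₀)) ^ 2
  have hD : ∫ y, D y ∂μ = 0 := by
    simpa [D] using integral_eq_apply_of_tendsto hx₀ hφ hconv (F := D) fun g y => by simp [D, hF]
  have hD0 : D =ᵐ[μ] 0 := (integral_eq_zero_iff_of_nonneg
    (fun y => by simpa [D] using sq_nonneg (F y - F x₀))
    ((BoundedContinuousFunction.mkOfCompact D).integrable μ)).1 hD
  filter_upwards [hD0] with y hy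
  simpa [D, sub_eq_zero] using hy

end OrbitalMeasures

theorem weak_limit_point_along_convergent_points_ergodic_general
    {G X : Type*} [Group G] [MeasurableSpace G]
    [MetricSpace X] [CompactSpace X] [MeasurableSpace X] [BorelSpace X] [MulAction G X]
    (hiso : ∀ g : G, Isometry (fun x : X => g • x))
    (K : ℕ → Subgroup G) (hmono : Monotone K)
    (hunion : ∀ g : G, ∃ n, g ∈ K n)
    (m : ∀ n, Measure (K n)) (hprob : ∀ n, IsProbabilityMeasure (m n))
    (hhaar : ∀ n (h : K n), Measure.map (fun g => h * g) (m n) = m n)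
    (x : ℕ → X) (hx : ∃ x₀ : X, Tendsto x atTop (𝓝 x₀))
    (μ : Measure X) (hμ : IsProbabilityMeasure μ)
    (φ : ℕ → ℕ) (hφ : StrictMono φ)
    (hconv : ∀ f : C(X, ℝ),
      Tendsto (fun i => ∫ g : K (φ i), f ((g : G) • x (φ i)) ∂(m (φ i))) atTop
        (𝓝 (∫ y, f y ∂μ))) :
    (∀ (g : G) (S : Set X), MeasurableSet S → μ ((fun y => g • y) ⁻¹' S) = μ S) ∧
      (∀ S : Set X, MeasurableSet S → (∀ g : G, (fun y => g • y) ⁻¹' S = S) →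
        μ S = 0 ∨ μ S = 1) := by
  have : IsIsometricSMul G X := ⟨hiso⟩
  obtain ⟨x₀, hx₀⟩ := hx
  have hpres : ∀ g : G, MeasurePreserving (g • ·) μ μ := fun g =>
    measurePreserving_of_forall_integral_comp_eq (continuous_const_smul g) fun f =>
      integral_comp_smul_eq_of_tendsto hmono hunion hhaar hφ hconv f.toContinuousMap g
  refine ⟨fun g S hS => (hpres g).measure_preimage hS.nullMeasurableSet, fun S hS hSinv => ?_⟩
  exact measure_eq_zero_or_one_of_forall_ae_eq_const hpres
    (fun F hF => ⟨F x₀, ae_eq_const_of_tendsto hx₀ hφ hconv hF⟩) hS hSinv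

/-- Let the union `K(∞) = ⋃ K n` of an increasing chain of compact subgroups act
by isometric homeomorphisms on a compact metric space `X`. If `(x n)` converges in `X` and `μ`
is a weak limit point of the orbital measures `μ_n^{x n}`, then `μ` is a `K(∞)`-invariant
ergodic probability measure. -/
theorem weak_limit_point_along_convergent_points_ergodic
    {G X : Type*} [Group G] [TopologicalSpace G] [IsTopologicalGroup G] [MeasurableSpace G]
    [MetricSpace X] [CompactSpace X] [MeasurableSpace X] [BorelSpace X] [MulAction G X]
    (hiso : ∀ g : G, Isometry (fun x : X => g • x))
    (K : ℕ → Subgroup G) (hmono : Monotone K)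
    (hcpt : ∀ n, IsCompact ((K n : Set G)))
    (hunion : ∀ g : G, ∃ n, g ∈ K n)
    (m : ∀ n, Measure (K n)) (hprob : ∀ n, IsProbabilityMeasure (m n))
    (hhaar : ∀ n (h : K n), Measure.map (fun g => h * g) (m n) = m n)
    (x : ℕ → X) (hx : ∃ x₀ : X, Tendsto x atTop (𝓝 x₀))
    (μ : Measure X) (hμ : IsProbabilityMeasure μ)
    (φ : ℕ → ℕ) (hφ : StrictMono φ)
    (hconv : ∀ f : C(X, ℝ),
      Tendsto (fun i => ∫ g : K (φ i), f ((g : G) • x (φ i)) ∂(m (φ i))) atTop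
        (𝓝 (∫ y, f y ∂μ))) :
    (∀ (g : G) (S : Set X), MeasurableSet S → μ ((fun y => g • y) ⁻¹' S) = μ S) ∧
      (∀ S : Set X, MeasurableSet S → (∀ g : G, (fun y => g • y) ⁻¹' S = S) →
        μ S = 0 ∨ μ S = 1) :=
  weak_limit_point_along_convergent_points_ergodic_general hiso K hmono hunion m hprob hhaar x hx μ
    hμ φ hφ hconv
end

section
/- For each n, let x_n be the element of X = {0,1}^{K(∞)} (K(∞) the Prüfer 2-group with chain K(n) = ℤ/2ⁿℤ) constructed so that x_n restricted to K(n) is the indicator function of K(n−1), and x_n restricted to each successive nontrivial coset g_m + K(m) (m ≥ n) is the translate of x_n|_{K(m)} by g_m. Then the K(n)-orbit of x_n under the translation action consists of exactly two points: x_n and 1 − x_n. -/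
open scoped Classical

/-!
Since `K (n-1)` has index two in `K n`, translating the indicator of `K (n-1)` by `h ∈ K n`
leaves it unchanged if `h ∈ K (n-1)` and complements it otherwise. As
`K (m+1) = K m ∪ (g_m + K m)` and `x` is `g_m`-periodic on `K m`, any relation
`x (a - h) = φ (x a)` holding on `K m` extends to `K (m+1)`, hence to all of `K(∞)`.
-/

namespace AddSubgroup

variable {G : Type*} [AddGroup G] {H L : AddSubgroup G}

theorem relIndex_eq_two_of_card_eq (hHL : H ≤ L) (hcard : Nat.card L = 2 * Nat.card H)
    (hH : Nat.card H ≠ 0) : H.relIndex L = 2 := by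
  have h := relIndex_mul_relIndex ⊥ H L bot_le hHL
  rw [relIndex_bot_left, relIndex_bot_left, hcard, mul_comm 2] at h
  exact Nat.eq_of_mul_eq_mul_left (Nat.pos_of_ne_zero hH) h

theorem sub_mem_iff_of_relIndex_eq_two (hHL : H.relIndex L = 2) {a b : G} (ha : a ∈ L)
    (hb : b ∈ L) : a - b ∈ H ↔ (a ∈ H ↔ b ∈ H) := by
  have h := add_mem_iff_of_index_two (H := H.addSubgroupOf L) hHL (a := ⟨a, ha⟩) (b := -⟨b, hb⟩)
  simpa only [mem_addSubgroupOf, coe_add, coe_neg, neg_mem_iff, sub_eq_add_neg] using h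

end AddSubgroup

open AddSubgroup

section Chain

variable {G : Type*} [AddCommGroup G] {K : ℕ → AddSubgroup G}

theorem relIndex_succ_eq_two_of_card_eq_two_pow (hmono : Monotone K)
    (hcard : ∀ n, Nat.card (K n) = 2 ^ n) (m : ℕ) : (K m).relIndex (K (m + 1)) = 2 :=
  relIndex_eq_two_of_card_eq (hmono m.le_succ) (by rw [hcard, hcard, pow_succ, mul_comm])
    (by simp [hcard])

theorem translate_eq_comp_of_mem_succ {α : Type*} {x : G → α} {φ : α → α} {g h : G} {m : ℕ}
    (hrel : (K m).relIndex (K (m + 1)) = 2) (hg : g ∈ K (m + 1) ∧ g ∉ K m)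
    (hxg : ∀ k ∈ K m, x (g + k) = x k) (hh : h ∈ K m)
    (hφ : ∀ a ∈ K m, x (a - h) = φ (x a)) : ∀ a ∈ K (m + 1), x (a - h) = φ (x a) := by
  intro a ha
  by_cases haK : a ∈ K m
  · exact hφ a haK
  have hk : a - g ∈ K m := by simp [sub_mem_iff_of_relIndex_eq_two hrel ha hg.1, haK, hg.2]
  calc x (a - h) = x (g + (a - g - h)) := by congr 1; abel
    _ = φ (x (a - g)) := by rw [hxg _ (sub_mem hk hh), hφ _ hk]
    _ = φ (x a) := by rw [← hxg _ hk, add_sub_cancel]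

theorem translate_eq_comp_of_forall_mem {α : Type*} {x : G → α} {φ : α → α} {gs : ℕ → G}
    {h : G} {n : ℕ} (hmono : Monotone K) (hcard : ∀ n, Nat.card (K n) = 2 ^ n)
    (hunion : ∀ a : G, ∃ n, a ∈ K n) (hgs : ∀ m, gs m ∈ K (m + 1) ∧ gs m ∉ K m)
    (hxg : ∀ m, n ≤ m → ∀ k ∈ K m, x (gs m + k) = x k) (hh : h ∈ K n)
    (hφ : ∀ a ∈ K n, x (a - h) = φ (x a)) (a : G) : x (a - h) = φ (x a) := by
  have hle : ∀ m, n ≤ m → ∀ a ∈ K m, x (a - h) = φ (x a) := by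
    intro m hm
    induction m, hm using Nat.le_induction with
    | base => exact hφ
    | succ m hm ih =>
      exact translate_eq_comp_of_mem_succ (relIndex_succ_eq_two_of_card_eq_two_pow hmono hcard m)
        (hgs m) (hxg m hm) (hmono hm hh) ih
  obtain ⟨m, ha⟩ := hunion a
  exact hle (max m n) (le_max_right m n) a (hmono (le_max_left m n) ha)

end Chain

/-- Let `G = K(∞) = ⋃ K n` be the union of an increasing chain of subgroups with
`K n ≅ ℤ/2ⁿℤ` (so `Nat.card (K n) = 2 ^ n`), and pick `gs m ∈ K (m+1) \ K m`. Let
`x : G → ZMod 2` be the configuration constructed in the paper: on `K n` it is the indicator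
of `K (n-1)`, and on each nontrivial coset `gs m + K m` (for `m ≥ n`) it is the translate of
its restriction to `K m`. Then the `K n`-orbit of `x` under the translation action
`(h • x)(a) = x (a - h)` consists of exactly the two points `x` and `1 - x`. -/
theorem orbit_of_constructed_configuration_is_pair
    {G : Type*} [AddCommGroup G]
    (K : ℕ → AddSubgroup G) (hmono : Monotone K)
    (hcard : ∀ n, Nat.card (K n) = 2 ^ n)
    (hunion : ∀ a : G, ∃ n, a ∈ K n)
    (gs : ℕ → G) (hgs : ∀ m, gs m ∈ K (m + 1) ∧ gs m ∉ K m)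
    (n : ℕ) (hn : 1 ≤ n)
    (x : G → ZMod 2)
    (hx1 : ∀ a ∈ K n, x a = if a ∈ K (n - 1) then 1 else 0)
    (hx2 : ∀ m, n ≤ m → ∀ k ∈ K m, x (gs m + k) = x k) :
    {y : G → ZMod 2 | ∃ h ∈ K n, y = fun a => x (a - h)} =
      {x, fun a => 1 - x a} := by
  obtain ⟨N, rfl⟩ : ∃ N, n = N + 1 := ⟨n - 1, by omega⟩
  rw [Nat.add_sub_cancel] at hx1
  have hrel := relIndex_succ_eq_two_of_card_eq_two_pow hmono hcard N
  have translate := fun φ h hh ↦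
    translate_eq_comp_of_forall_mem (φ := φ) hmono hcard hunion hgs hx2 (h := h) hh
  have hfix : ∀ h ∈ K (N + 1), h ∈ K N → ∀ a, x (a - h) = x a := fun h hh hhN ↦
    translate id h hh fun a ha ↦ by
      simp [hx1 a ha, hx1 _ (sub_mem ha hh), sub_mem_iff_of_relIndex_eq_two hrel ha hh, hhN]
  have hflip : ∀ h ∈ K (N + 1), h ∉ K N → ∀ a, x (a - h) = 1 - x a := fun h hh hhN ↦
    translate (1 - ·) h hh fun a ha ↦ by
      rw [hx1 a ha, hx1 _ (sub_mem ha hh), sub_mem_iff_of_relIndex_eq_two hrel ha hh]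
      by_cases haN : a ∈ K N <;> simp [haN, hhN]
  ext y
  constructor
  · rintro ⟨h, hh, rfl⟩
    by_cases hhN : h ∈ K N
    · exact .inl (funext (hfix h hh hhN))
    · exact .inr (funext (hflip h hh hhN))
  · rintro (rfl | rfl)
    · exact ⟨0, zero_mem _, by simp⟩
    · exact ⟨gs N, (hgs N).1, (funext (hflip _ (hgs N).1 (hgs N).2)).symm⟩
end

section
/- There exists an inductively compact group K(∞) (the union of an increasing chain of compact groups), a compact metric space X on which K(∞) acts by homeomorphisms, and a sequence of points (x_n) in X such that the orbital measures μ_n^{x_n} converge weakly to a K(∞)-invariant probability measure that is not ergodic; in fact one can take the limit to be (δ_a + δ_b)/2 for two distinct fixed points a, b of the action. -/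
/-!
Take a countable group `G = ⋃ K n` in which each finite subgroup `K n` has index two in
`K (n + 1)`, acting by translations on `X = {0,1}^G`. The orbit of the indicator `x n` of `K n`
under `K (n + 1)` consists of `x n` itself and the indicator of the other coset
`K (n + 1) \ K n`, each carried with mass `1/2` by the orbital measure. As `n → ∞` the first
tends to the constant configuration `1` and the second to `0`, so the orbital measures converge
to `(δ₀ + δ₁)/2`; the singleton `{0}` is an invariant set of measure `1/2`. The Prüfer 2-group
of `2`-power roots of unity is such a `G`.
-/

open Filter Topology

/-- packaged counterexample data: an inductively compact group `G = ⋃ K n`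
(increasing chain of compact subgroups with normalized Haar measures), a compact metric space
`X` on which `G` acts by homeomorphisms, a sequence of points `x n`, and two distinct fixed
points `a, b` such that the orbital measures `μ_n^{x n}` converge weakly to the measure
`(δ_a + δ_b)/2`, which is `G`-invariant but not ergodic. -/
structure OrbitalLimitNotErgodicCounterexample where
  G : Type
  [grpG : Group G]
  [topG : TopologicalSpace G]
  [topGrpG : IsTopologicalGroup G]
  [measG : MeasurableSpace G]
  K : ℕ → Subgroup G
  mono : Monotone K
  cpt : ∀ n, IsCompact ((K n : Set G))
  union : ∀ g : G, ∃ n, g ∈ K n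
  m : ∀ n, MeasureTheory.Measure (K n)
  prob : ∀ n, MeasureTheory.IsProbabilityMeasure (m n)
  haar : ∀ n (h : K n), MeasureTheory.Measure.map (fun g => h * g) (m n) = m n
  X : Type
  [metX : MetricSpace X]
  [cptX : CompactSpace X]
  [measX : MeasurableSpace X]
  [borelX : BorelSpace X]
  [act : MulAction G X]
  homeo : ∀ g : G, Continuous (fun y : X => g • y)
  x : ℕ → X
  a : X
  b : X
  hab : a ≠ b
  fixa : ∀ g : G, g • a = a
  fixb : ∀ g : G, g • b = b
  conv : ∀ f : C(X, ℝ),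
    Tendsto (fun n => ∫ g : K n, f ((g : G) • x n) ∂(m n)) atTop
      (𝓝 (∫ y, f y ∂((2 : ENNReal)⁻¹ •
        (MeasureTheory.Measure.dirac a + MeasureTheory.Measure.dirac b))))
  inv : ∀ (g : G) (S : Set X), MeasurableSet S →
    ((2 : ENNReal)⁻¹ • (MeasureTheory.Measure.dirac a + MeasureTheory.Measure.dirac b))
        ((fun y => g • y) ⁻¹' S) =
      ((2 : ENNReal)⁻¹ • (MeasureTheory.Measure.dirac a + MeasureTheory.Measure.dirac b)) S
  notErg : ∃ S : Set X, MeasurableSet S ∧ (∀ g : G, (fun y => g • y) ⁻¹' S = S) ∧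
    ((2 : ENNReal)⁻¹ • (MeasureTheory.Measure.dirac a + MeasureTheory.Measure.dirac b)) S ≠ 0 ∧
    ((2 : ENNReal)⁻¹ • (MeasureTheory.Measure.dirac a + MeasureTheory.Measure.dirac b)) S ≠ 1

open MeasureTheory ProbabilityTheory Set
open scoped ENNReal Pointwise

namespace Subgroup

variable {G : Type*} [Group G] {H K : Subgroup G}

theorem smul_coe_eq_diff_of_relIndex_eq_two (hHK : H ≤ K) (h2 : H.relIndex K = 2) {g : G}
    (hgK : g ∈ K) (hgH : g ∉ H) : g • (H : Set G) = (K : Set G) \ H := by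
  ext x
  rw [mem_smul_set_iff_inv_smul_mem, smul_eq_mul, Set.mem_sdiff, SetLike.mem_coe, SetLike.mem_coe]
  by_cases hxK : x ∈ K
  · have := mul_mem_iff_of_index_two h2 (a := ⟨g⁻¹, K.inv_mem hgK⟩) (b := ⟨x, hxK⟩)
    simp only [mem_subgroupOf, coe_mul, inv_mem_iff] at this
    simp [this, hgH, hxK]
  · refine iff_of_false (fun hx => hxK ?_) (fun hx => hxK hx.1)
    simpa using K.mul_mem hgK (hHK hx)

theorem countable_of_forall_exists_mem_finite {K : ℕ → Subgroup G} [∀ n, Finite (K n)]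
    (hcov : ∀ g, ∃ n, g ∈ K n) : Countable G := by
  rw [← countable_univ_iff, ← iUnion_eq_univ_iff.2 hcov]
  exact countable_iUnion fun n => (K n : Set G).toFinite.countable

end Subgroup

section Indicator

variable {α M : Type*} [Zero M] [One M] [TopologicalSpace M] {s : ℕ → Set α}

theorem Monotone.tendsto_indicator_one (hs : Monotone s) (hcov : ∀ a, ∃ n, a ∈ s n) :
    Tendsto (fun n => (s n).indicator (1 : α → M)) atTop (𝓝 1) := by
  refine tendsto_pi_nhds.2 fun a => (pure_le_nhds _).trans' ?_
  simpa [iUnion_eq_univ_iff.2 hcov] using hs.tendsto_indicator s (1 : α → M) a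

theorem Monotone.tendsto_indicator_succ_diff (hs : Monotone s) (hcov : ∀ a, ∃ n, a ∈ s n) :
    Tendsto (fun n => (s (n + 1) \ s n).indicator (1 : α → M)) atTop (𝓝 0) := by
  refine tendsto_pi_nhds.2 fun a => tendsto_const_nhds.congr' ?_
  obtain ⟨N, hN⟩ := hcov a
  filter_upwards [eventually_ge_atTop N] with n hn
  exact (indicator_of_notMem (fun h => h.2 (hs hn hN)) _).symm

end Indicator

section ArrowAction

attribute [local instance] arrowAction

theorem smul_indicator_one {G M : Type*} [Group G] [Zero M] [One M] (g : G) (s : Set G) :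
    g • s.indicator (1 : G → M) = (g • s).indicator 1 := by
  funext x
  change s.indicator 1 (g⁻¹ • x) = _
  rw [← preimage_smul_inv, ← indicator_comp_right]
  rfl

theorem continuous_arrowAction_smul {G M : Type*} [Group G] [TopologicalSpace M] (g : G) :
    Continuous (fun y : G → M => g • y) :=
  continuous_pi fun _ => continuous_apply _

theorem measurable_arrowAction_smul {G M : Type*} [Group G] [MeasurableSpace M] (g : G) :
    Measurable (fun y : G → M => g • y) :=
  measurable_pi_lambda _ fun _ => measurable_pi_apply _

end ArrowAction

namespace MeasureTheory.Measure

variable {α X : Type*} [MeasurableSpace α] [MeasurableSpace X]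

theorem map_ite_mem (μ : Measure α) {A : Set α} (hA : MeasurableSet A) [DecidablePred (· ∈ A)]
    (x y : X) :
    μ.map (fun a => if a ∈ A then x else y) = μ A • dirac x + μ Aᶜ • dirac y := by
  have hf : Measurable (fun a => if a ∈ A then x else y) := measurable_const.ite hA measurable_const
  conv_lhs => rw [← μ.restrict_add_restrict_compl hA]
  rw [Measure.map_add _ _ hf, map_congr (ae_restrict_of_forall_mem hA fun a ha => if_pos ha),
    map_congr (ae_restrict_of_forall_mem hA.compl fun a ha => if_neg ha),
    map_const, map_const, restrict_apply_univ, restrict_apply_univ]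

theorem map_smul_dirac_add_dirac {f : α → X} (hf : Measurable f) (c : ℝ≥0∞) (a b : α) :
    (c • (dirac a + dirac b)).map f = c • (dirac (f a) + dirac (f b)) := by
  rw [Measure.map_smul, Measure.map_add _ _ hf, map_dirac' hf, map_dirac' hf]

theorem smul_dirac_add_dirac_preimage_of_fixed {f : α → α} {a b : α} (hf : Measurable f)
    (ha : f a = a) (hb : f b = b) (c : ℝ≥0∞) {S : Set α} (hS : MeasurableSet S) :
    (c • (dirac a + dirac b)) (f ⁻¹' S) = (c • (dirac a + dirac b)) S := by
  rw [← map_apply hf hS, map_smul_dirac_add_dirac hf, ha, hb]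

variable [MeasurableSingletonClass α]

theorem integral_half_dirac_add (f : α → ℝ) (a b : α) :
    ∫ y, f y ∂((2 : ℝ≥0∞)⁻¹ • (dirac a + dirac b)) = (f a + f b) / 2 := by
  rw [integral_smul_measure, integral_add_measure (integrable_dirac enorm_lt_top)
    (integrable_dirac enorm_lt_top), integral_dirac, integral_dirac]
  simp [div_eq_inv_mul]

theorem half_dirac_add_apply_singleton {a b : α} (hab : a ≠ b) :
    ((2 : ℝ≥0∞)⁻¹ • (dirac a + dirac b)) {a} = 2⁻¹ := by
  simp [hab.symm]

theorem exists_smul_invariant_half_dirac_add_ne_zero_ne_one {a b : α}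
    {G : Type*} [Group G] [MulAction G α] (hab : a ≠ b) (ha : ∀ g : G, g • a = a) :
    ∃ S : Set α, MeasurableSet S ∧ (∀ g : G, (fun y => g • y) ⁻¹' S = S) ∧
      ((2 : ℝ≥0∞)⁻¹ • (dirac a + dirac b)) S ≠ 0 ∧ ((2 : ℝ≥0∞)⁻¹ • (dirac a + dirac b)) S ≠ 1 := by
  refine ⟨{a}, measurableSet_singleton a, fun g => ?_, ?_⟩
  · rw [preimage_smul, smul_set_singleton, ha]
  · rw [half_dirac_add_apply_singleton hab]
    exact ⟨by simp, by simp⟩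

end MeasureTheory.Measure

section UniformOn

variable {G : Type*} [Group G] [Finite G] [MeasurableSpace G] [MeasurableSingletonClass G]

theorem map_mul_left_uniformOn_univ (g : G) :
    Measure.map (g * ·) (uniformOn (univ : Set G)) = uniformOn univ := by
  rw [uniformOn, ProbabilityTheory.cond, Measure.restrict_univ, Measure.map_smul,
    Measure.IsMulLeftInvariant.map_mul_left_eq_self]

theorem uniformOn_univ_coe_subgroup (H : Subgroup G) :
    uniformOn univ (H : Set G) = (H.index : ℝ≥0∞)⁻¹ := by
  have : Fintype G := Fintype.ofFinite G
  have hH : (Nat.card H : ℝ≥0∞) ≠ 0 := by exact_mod_cast Nat.card_pos.ne'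
  rw [uniformOn_univ, Measure.count_apply_finite' (toFinite _) (by measurability),
    ← Nat.card_eq_fintype_card, ← H.card_mul_index, Nat.cast_mul,
    ← Nat.card_eq_card_finite_toFinset, SetLike.coe_sort_coe, mul_comm, ENNReal.div_eq_inv_mul,
    ENNReal.mul_inv (by simp) (Or.inl (ENNReal.natCast_ne_top _)), mul_assoc,
    ENNReal.inv_mul_cancel hH (ENNReal.natCast_ne_top _), mul_one]

theorem map_uniformOn_univ_ite_of_index_eq_two {X : Type*} [MeasurableSpace X] {H : Subgroup G}
    (hH : H.index = 2) (x y : X) [DecidablePred (· ∈ H)] :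
    Measure.map (fun g => if g ∈ H then x else y) (uniformOn univ) =
      (2 : ℝ≥0∞)⁻¹ • (Measure.dirac x + Measure.dirac y) := by
  refine (Measure.map_ite_mem (A := (H : Set G)) _ (by measurability) x y).trans ?_
  rw [prob_compl_eq_one_sub (by measurability), uniformOn_univ_coe_subgroup, hH, Nat.cast_two,
    ENNReal.one_sub_inv_two, smul_add]

end UniformOn

namespace OrbitalLimitNotErgodicCounterexample

attribute [local instance] arrowAction

variable {G : Type} [Group G] [MeasurableSpace G] [MeasurableSingletonClass G]
  {K : ℕ → Subgroup G} [∀ n, Finite (K n)]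

theorem map_uniformOn_smul_indicator (hmono : Monotone K)
    (hidx : ∀ n, (K n).relIndex (K (n + 1)) = 2) (n : ℕ) :
    (uniformOn (univ : Set (K (n + 1)))).map
        (fun g : K (n + 1) => (g : G) • (K n : Set G).indicator (1 : G → Fin 2)) =
      (2 : ℝ≥0∞)⁻¹ • (Measure.dirac ((K n : Set G).indicator 1) +
        Measure.dirac (((K (n + 1) : Set G) \ K n).indicator 1)) := by
  classical
  have horbit : (fun g : K (n + 1) => (g : G) • (K n : Set G).indicator (1 : G → Fin 2)) =
      fun g => if g ∈ (K n).subgroupOf (K (n + 1)) then (K n : Set G).indicator 1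
        else ((K (n + 1) : Set G) \ K n).indicator 1 := by
    funext g
    rw [smul_indicator_one]
    split_ifs with hg
    · rw [leftCoset_mem_leftCoset _ (Subgroup.mem_subgroupOf.1 hg)]
    · rw [Subgroup.smul_coe_eq_diff_of_relIndex_eq_two (hmono n.le_succ) (hidx n) g.2 hg]
  rw [horbit]
  exact map_uniformOn_univ_ite_of_index_eq_two (hidx n) _ _

theorem tendsto_integral_uniformOn_smul_indicator (hmono : Monotone K)
    (hcov : ∀ g, ∃ n, g ∈ K n) (hidx : ∀ n, (K n).relIndex (K (n + 1)) = 2)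
    (f : C(G → Fin 2, ℝ)) :
    Tendsto (fun n => ∫ g : K (n + 1), f ((g : G) • (K n : Set G).indicator 1) ∂uniformOn univ)
      atTop (𝓝 (∫ y, f y ∂((2 : ℝ≥0∞)⁻¹ • (Measure.dirac 0 + Measure.dirac 1)))) := by
  have := Subgroup.countable_of_forall_exists_mem_finite hcov
  have horbit (n : ℕ) : ∫ g : K (n + 1), f ((g : G) • (K n : Set G).indicator 1) ∂uniformOn univ =
      (f ((K n : Set G).indicator 1) + f (((K (n + 1) : Set G) \ K n).indicator 1)) / 2 := by
    rw [← integral_map (measurable_of_finite _).aemeasurable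
      f.continuous.aestronglyMeasurable, map_uniformOn_smul_indicator hmono hidx,
      Measure.integral_half_dirac_add]
  have hcov' : ∀ g, ∃ n, g ∈ (K n : Set G) := hcov
  simp_rw [horbit, Measure.integral_half_dirac_add, add_comm (f 0)]
  exact (((f.continuous.tendsto 1).comp (hmono.tendsto_indicator_one hcov')).add
    ((f.continuous.tendsto 0).comp (hmono.tendsto_indicator_succ_diff hcov'))).div_const 2

variable [TopologicalSpace G] [IsTopologicalGroup G]

noncomputable def ofIndexTwoChain (hmono : Monotone K) (hcov : ∀ g, ∃ n, g ∈ K n)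
    (hidx : ∀ n, (K n).relIndex (K (n + 1)) = 2) : OrbitalLimitNotErgodicCounterexample :=
  haveI := Subgroup.countable_of_forall_exists_mem_finite hcov
  { G := G
    K := fun n => K (n + 1)
    mono := fun _ _ h => hmono (Nat.succ_le_succ h)
    cpt := fun n => (K (n + 1) : Set G).toFinite.isCompact
    union := fun g => (hcov g).imp fun n hn => hmono n.le_succ hn
    m := fun _ => uniformOn univ
    prob := fun _ => inferInstance
    haar := fun _ => map_mul_left_uniformOn_univ
    X := G → Fin 2
    metX := TopologicalSpace.metrizableSpaceMetric _
    act := arrowAction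
    homeo := continuous_arrowAction_smul
    x := fun n => (K n : Set G).indicator 1
    a := 0
    b := 1
    hab := fun h => zero_ne_one (congrFun h 1)
    fixa := fun _ => rfl
    fixb := fun _ => rfl
    conv := tendsto_integral_uniformOn_smul_indicator hmono hcov hidx
    inv := fun g _ hS => Measure.smul_dirac_add_dirac_preimage_of_fixed
      (measurable_arrowAction_smul g) rfl rfl _ hS
    notErg := Measure.exists_smul_invariant_half_dirac_add_ne_zero_ne_one
      (fun h => zero_ne_one (congrFun h 1)) fun _ => rfl }

end OrbitalLimitNotErgodicCounterexample

instance Units.instMeasurableSingletonClass {M : Type*} [Monoid M] [MeasurableSpace M]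
    [MeasurableSingletonClass M] : MeasurableSingletonClass Mˣ where
  measurableSet_singleton u := by
    rw [← Units.val_injective.preimage_image {u}, image_singleton]
    exact (measurableSet_singleton (u : M)).preimage (comap_measurable Units.val)

abbrev pruferTwo : Subgroup ℂˣ := ⨆ n : ℕ, rootsOfUnity (2 ^ n) ℂ

theorem monotone_rootsOfUnity_two_pow : Monotone fun n : ℕ => rootsOfUnity (2 ^ n) ℂ :=
  fun _ _ h => rootsOfUnity_le_of_dvd (pow_dvd_pow 2 h)

theorem relIndex_rootsOfUnity_two_pow_succ (n : ℕ) :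
    (rootsOfUnity (2 ^ n) ℂ).relIndex (rootsOfUnity (2 ^ (n + 1)) ℂ) = 2 := by
  have := Subgroup.relIndex_mul_relIndex ⊥ _ _ bot_le (monotone_rootsOfUnity_two_pow n.le_succ)
  rw [Subgroup.relIndex_bot_left, Subgroup.relIndex_bot_left, Complex.card_rootsOfUnity,
    Complex.card_rootsOfUnity, pow_succ] at this
  exact Nat.eq_of_mul_eq_mul_left (by positivity) this

instance (n : ℕ) : Finite ((rootsOfUnity (2 ^ n) ℂ).subgroupOf pruferTwo) :=
  Finite.of_equiv _ (Subgroup.subgroupOfEquivOfLe (le_iSup _ n)).toEquiv.symm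

theorem exists_mem_rootsOfUnity_two_pow (g : pruferTwo) :
    ∃ n, g ∈ (rootsOfUnity (2 ^ n) ℂ).subgroupOf pruferTwo :=
  (Subgroup.mem_iSup_of_directed monotone_rootsOfUnity_two_pow.directed_le).1 g.2

/-- such a counterexample exists (the Prüfer 2-group acting by translations on
`{0,1}^{K(∞)}`, with limit `(δ_a + δ_b)/2` for the two constant configurations). -/
theorem exists_orbital_limit_not_ergodic :
    Nonempty OrbitalLimitNotErgodicCounterexample :=
  ⟨.ofIndexTwoChain (K := fun n => (rootsOfUnity (2 ^ n) ℂ).subgroupOf pruferTwo)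
    (fun _ _ h => Subgroup.subgroupOf_mono _ (monotone_rootsOfUnity_two_pow h))
    exists_mem_rootsOfUnity_two_pow
    fun n => (Subgroup.relIndex_subgroupOf (le_iSup _ _)).trans
      (relIndex_rootsOfUnity_two_pow_succ n)⟩
end
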